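/- arXiv:2604.09957 — 2 statements merged into one kernel-verified Lean document; each statement's English description precedes it below -/
import Mathlib

section
/- Let P and O be n×n complex matrices with P² = 1. Then for every real θ, exp(i(θ/2)P) · O · exp(-i(θ/2)P) = (O + P·O·P)/2 + cos(θ)·(O - P·O·P)/2 + sin(θ)·(i/2)·(P·O - O·P). In particular, the conjugated observable is an affine combination of cos θ and sin θ with θ-independent matrix coefficients. -/
open NormedSpace

/-!
Because `P * P = 1`, the even and odd parts of the exponential series collapse to
`exp (i z P) = cos z + i sin z • P`. Conjugating `O` by this and its inverse gives
`cos² (θ/2) • O + sin² (θ/2) • P O P + i cos (θ/2) sin (θ/2) • [P, O]`, and the half-angle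
formulas turn the coefficients into `(1 ± cos θ)/2` and `sin θ / 2`.
-/

open Nat in
theorem exp_I_smul_of_mul_self_eq_one {A : Type*} [Ring A] [Algebra ℂ A] [TopologicalSpace A]
    [IsTopologicalRing A] [ContinuousSMul ℂ A] [T2Space A] {P : A} (hP : P * P = 1) (z : ℂ) :
    exp ((Complex.I * z) • P) = Complex.cos z • (1 : A) + (Complex.I * Complex.sin z) • P := by
  have hP_even (k : ℕ) : P ^ (2 * k) = 1 := by rw [pow_mul, sq, hP, one_pow]
  have hI_even (k : ℕ) : (Complex.I * z) ^ (2 * k) = (-1) ^ k * z ^ (2 * k) := by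
    rw [mul_pow, pow_mul, Complex.I_sq]
  have h_even : HasSum (fun k : ℕ ↦ ((2 * k)! : ℂ)⁻¹ • ((Complex.I * z) • P) ^ (2 * k))
      (Complex.cos z • (1 : A)) := by
    convert (Complex.hasSum_cos z).smul_const (1 : A) using 2 with k
    rw [smul_pow, hP_even, hI_even, smul_smul, div_eq_inv_mul]
  have h_odd : HasSum (fun k : ℕ ↦ ((2 * k + 1)! : ℂ)⁻¹ • ((Complex.I * z) • P) ^ (2 * k + 1))
      ((Complex.I * Complex.sin z) • P) := by
    convert ((Complex.hasSum_sin z).mul_left Complex.I).smul_const P using 2 with k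
    rw [smul_pow, pow_succ, pow_succ, hP_even, one_mul, hI_even, smul_smul]
    ring_nf
  rw [exp_eq_tsum ℂ]
  exact (HasSum.even_add_odd (f := fun k ↦ (k ! : ℂ)⁻¹ • ((Complex.I * z) • P) ^ k)
    h_even h_odd).tsum_eq

theorem smul_one_add_I_smul_mul_mul_smul_one_sub_I_smul {A : Type*} [Ring A] [Algebra ℂ A]
    (c s : ℂ) (P O : A) :
    (c • (1 : A) + (Complex.I * s) • P) * O * (c • (1 : A) - (Complex.I * s) • P) =
      c ^ 2 • O + s ^ 2 • (P * O * P) + (Complex.I * c * s) • (P * O - O * P) := by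
  simp only [add_mul, mul_sub, smul_mul_assoc, mul_smul_comm, one_mul, mul_one]
  match_scalars
  · ring
  · ring
  · ring
  · linear_combination (-s ^ 2) * Complex.I_sq

/-- If `P` and `O` are `n × n` complex matrices with `P ^ 2 = 1`, then for every
real `θ`,
`exp (i(θ/2)P) * O * exp (-i(θ/2)P)
  = (O + P·O·P)/2 + cos θ • (O - P·O·P)/2 + sin θ • (i/2) • (P·O - O·P)`. -/
theorem conj_exp_of_sq_eq_one {n : ℕ} (P O : Matrix (Fin n) (Fin n) ℂ)
    (hP : P * P = 1) (θ : ℝ) :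
    NormedSpace.exp ((Complex.I * (θ / 2 : ℂ)) • P) * O *
        NormedSpace.exp ((-(Complex.I * (θ / 2 : ℂ))) • P) =
      ((2 : ℂ)⁻¹) • (O + P * O * P)
        + (Real.cos θ : ℂ) • (((2 : ℂ)⁻¹) • (O - P * O * P))
        + (Real.sin θ : ℂ) • ((Complex.I / 2) • (P * O - O * P)) := by
  rw [← mul_neg, exp_I_smul_of_mul_self_eq_one hP, exp_I_smul_of_mul_self_eq_one hP,
    Complex.cos_neg, Complex.sin_neg, mul_neg, neg_smul, ← sub_eq_add_neg,
    smul_one_add_I_smul_mul_mul_smul_one_sub_I_smul]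
  have h_cos : (Real.cos θ : ℂ) = 2 * Complex.cos (θ / 2) ^ 2 - 1 := by
    rw [← Complex.cos_two_mul, mul_div_cancel₀ _ two_ne_zero, Complex.ofReal_cos]
  have h_sin : (Real.sin θ : ℂ) = 2 * Complex.sin (θ / 2) * Complex.cos (θ / 2) := by
    rw [← Complex.sin_two_mul, mul_div_cancel₀ _ two_ne_zero, Complex.ofReal_sin]
  rw [h_cos, h_sin]
  simp only [smul_add, smul_sub, smul_smul]
  match_scalars
  · ring
  · linear_combination Complex.sin_sq_add_cos_sq ((θ : ℂ) / 2)
  · ring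
  · ring
end

section
/- Let a, b, c be real numbers and define f : ℝ → ℝ by f(θ) = a + b·cos θ + c·sin θ. Then for every θ, the derivative of f satisfies f'(θ) = (f(θ + π/2) - f(θ - π/2))/2. -/
open Real

/-! The derivative of `a + b cos θ + c sin θ` is `c cos θ - b sin θ`, and the addition formulas
give `f (θ + s) - f (θ - s) = 2 sin s · (c cos θ - b sin θ)` for every shift `s`; at `s = π / 2`
the factor `2 sin s` is `2`. -/

noncomputable def trigAffine (a b c θ : ℝ) : ℝ := a + b * cos θ + c * sin θ

theorem hasDerivAt_trigAffine (a b c θ : ℝ) :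
    HasDerivAt (trigAffine a b c) (c * cos θ - b * sin θ) θ := by
  refine (((hasDerivAt_const θ a).fun_add ((hasDerivAt_cos θ).const_mul b)).fun_add
    ((hasDerivAt_sin θ).const_mul c)).congr_deriv ?_
  ring

theorem trigAffine_add_sub_trigAffine_sub (a b c θ s : ℝ) :
    trigAffine a b c (θ + s) - trigAffine a b c (θ - s) = 2 * sin s * (c * cos θ - b * sin θ) := by
  simp only [trigAffine, cos_add, sin_add, cos_sub, sin_sub]
  ring

theorem deriv_trigAffine_eq_shift_div (a b c θ : ℝ) {s : ℝ} (hs : sin s ≠ 0) :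
    deriv (trigAffine a b c) θ =
      (trigAffine a b c (θ + s) - trigAffine a b c (θ - s)) / (2 * sin s) := by
  rw [(hasDerivAt_trigAffine a b c θ).deriv, trigAffine_add_sub_trigAffine_sub]
  field_simp

/-- **parameter-shift rule.** For `f θ = a + b cos θ + c sin θ`, the derivative
satisfies `f' θ = (f (θ + π/2) - f (θ - π/2)) / 2` for every `θ`. -/
theorem parameter_shift_rule (a b c : ℝ) (θ : ℝ) :
    deriv (fun θ : ℝ => a + b * Real.cos θ + c * Real.sin θ) θ =
      ((a + b * Real.cos (θ + π / 2) + c * Real.sin (θ + π / 2))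
        - (a + b * Real.cos (θ - π / 2) + c * Real.sin (θ - π / 2))) / 2 := by
  have h := deriv_trigAffine_eq_shift_div a b c θ (s := π / 2) (by simp)
  rwa [sin_pi_div_two, mul_one] at h
end
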